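/- arXiv:2007.12691 — 4 statements merged into one kernel-verified Lean document; each statement's English description precedes it below -/
import Mathlib

section
/- The Pearcey integral P(x) = (1/2π) ∫_{-∞}^{∞} exp(-t⁴/4 - ρt²/2 + itx) dt satisfies the third-order linear ODE P'''(x) = x·P(x) + ρ·P'(x) for all real x and real parameter ρ. -/
open MeasureTheory Complex Filter Set Topology

noncomputable section

/-- The Pearcey integrand. -/
def pf (ρ : ℝ) (y t : ℝ) : ℂ :=
  Complex.exp (-(t : ℂ) ^ 4 / 4 - (ρ : ℂ) / 2 * (t : ℂ) ^ 2 + Complex.I * (t : ℂ) * (y : ℂ))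

/-- Real part of the exponent. -/
def pw (ρ : ℝ) (t : ℝ) : ℝ := -t ^ 4 / 4 - ρ / 2 * t ^ 2

lemma pf_eq (ρ y t : ℝ) : pf ρ y t = Complex.exp ((pw ρ t : ℂ) + (t * y : ℝ) * I) := by
  unfold pf pw
  push_cast
  ring_nf

lemma norm_pf (ρ y t : ℝ) : ‖pf ρ y t‖ = Real.exp (pw ρ t) := by
  rw [pf_eq, Complex.norm_exp]
  simp

lemma cont_pf (ρ y : ℝ) : Continuous (fun t : ℝ => pf ρ y t) := by
  unfold pf; fun_prop

lemma pw_le (ρ t : ℝ) : pw ρ t ≤ (1 - ρ)^2/4 - t^2/2 := by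
  unfold pw; nlinarith [sq_nonneg (t^2 - (1 - ρ))]

lemma abs_pow_le (n : ℕ) (t : ℝ) :
    |t| ^ n ≤ 1 + 4 ^ n * n.factorial * Real.exp (t^2/4) := by
  have hexp : (t^2/4)^n / n.factorial ≤ Real.exp (t^2/4) :=
    Real.pow_div_factorial_le_exp (x := t^2/4) (by positivity) n
  have hfac : (0:ℝ) < n.factorial := by positivity
  have h2n : (t^2)^n ≤ 4 ^ n * n.factorial * Real.exp (t^2/4) := by
    have := (div_le_iff₀ hfac).mp hexp
    calc (t^2)^n = (t^2/4)^n * 4^n := by rw [div_pow, div_mul_cancel₀]; positivity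
    _ ≤ (Real.exp (t^2/4) * n.factorial) * 4^n := by
        apply mul_le_mul_of_nonneg_right this (by positivity)
    _ = 4 ^ n * n.factorial * Real.exp (t^2/4) := by ring
  rcases le_or_gt |t| 1 with h | h
  · have : |t| ^ n ≤ 1 := pow_le_one₀ (abs_nonneg t) h
    have : (0:ℝ) ≤ 4 ^ n * n.factorial * Real.exp (t^2/4) := by positivity
    linarith
  · have h1 : |t| ^ n ≤ |t| ^ (2*n) :=
      pow_le_pow_right₀ h.le (by omega)
    have h2 : |t| ^ (2*n) = (t^2)^n := by
      rw [pow_mul, _root_.sq_abs]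
    nlinarith

lemma intE (ρ : ℝ) (n : ℕ) :
    Integrable (fun t : ℝ => |t| ^ n * Real.exp (pw ρ t)) := by
  set K : ℝ := Real.exp ((1 - ρ)^2/4) with hK
  have hg : Integrable (fun t : ℝ => K * Real.exp (-(2⁻¹:ℝ) * t^2)
      + (K * (4 ^ n * n.factorial)) * Real.exp (-(4⁻¹:ℝ) * t^2)) :=
    ((integrable_exp_neg_mul_sq (by norm_num : (0:ℝ) < 2⁻¹)).const_mul K).add
      ((integrable_exp_neg_mul_sq (by norm_num : (0:ℝ) < 4⁻¹)).const_mul _)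
  refine hg.mono' ((Continuous.mul (by continuity) (by unfold pw; continuity)).aestronglyMeasurable) (Filter.Eventually.of_forall fun t => ?_)
  have h0 : (0:ℝ) ≤ |t| ^ n * Real.exp (pw ρ t) := by positivity
  rw [Real.norm_eq_abs, _root_.abs_of_nonneg h0]
  have h1 : Real.exp (pw ρ t) ≤ K * Real.exp (-(2⁻¹:ℝ) * t^2) := by
    rw [hK, ← Real.exp_add]
    apply Real.exp_le_exp.mpr
    have := pw_le ρ t
    linarith
  calc |t| ^ n * Real.exp (pw ρ t)
      ≤ (1 + 4 ^ n * n.factorial * Real.exp (t^2/4)) * (K * Real.exp (-(2⁻¹:ℝ) * t^2)) := by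
        apply mul_le_mul (abs_pow_le n t) h1 (Real.exp_pos _).le (by positivity)
    _ = K * Real.exp (-(2⁻¹:ℝ) * t^2)
        + (K * (4 ^ n * n.factorial)) * (Real.exp (t^2/4) * Real.exp (-(2⁻¹:ℝ) * t^2)) := by ring
    _ = K * Real.exp (-(2⁻¹:ℝ) * t^2)
        + (K * (4 ^ n * n.factorial)) * Real.exp (-(4⁻¹:ℝ) * t^2) := by
        have he : Real.exp (t^2/4) * Real.exp (-(2⁻¹:ℝ) * t^2) = Real.exp (-(4⁻¹:ℝ) * t^2) := by
          rw [← Real.exp_add]; congr 1; ring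
        rw [he]

lemma norm_pow_pf (ρ : ℝ) (n : ℕ) (y t : ℝ) :
    ‖(t:ℂ) ^ n * pf ρ y t‖ = |t| ^ n * Real.exp (pw ρ t) := by
  rw [norm_mul, norm_pow, Complex.norm_real, Real.norm_eq_abs, norm_pf]

lemma intn (ρ : ℝ) (n : ℕ) (y : ℝ) :
    Integrable (fun t : ℝ => (t:ℂ) ^ n * pf ρ y t) := by
  refine (intE ρ n).mono' ?_ (Filter.Eventually.of_forall fun t => ?_)
  · exact (Continuous.mul (by fun_prop) (cont_pf ρ y)).aestronglyMeasurable
  · rw [norm_pow_pf]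

lemma hasDerivAt_pf_y (ρ t y : ℝ) :
    HasDerivAt (fun y : ℝ => pf ρ y t) (Complex.I * t * pf ρ y t) y := by
  unfold pf
  have h0 : HasDerivAt (fun y : ℝ => (y : ℂ)) 1 y := (hasDerivAt_id y).ofReal_comp
  have h1 : HasDerivAt (fun y : ℝ =>
      -(t : ℂ) ^ 4 / 4 - (ρ : ℂ) / 2 * (t : ℂ) ^ 2 + Complex.I * (t : ℂ) * (y : ℂ))
      (Complex.I * t) y := by
    simpa using (((h0.const_mul (Complex.I * (t:ℂ)))).const_add
      (-(t : ℂ) ^ 4 / 4 - (ρ : ℂ) / 2 * (t : ℂ) ^ 2))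
  have h2 := h1.cexp
  convert h2 using 1
  ring

lemma hasDerivAt_pf_t (ρ y t : ℝ) :
    HasDerivAt (fun t : ℝ => pf ρ y t)
      ((-(t:ℂ)^3 - (ρ:ℂ)*(t:ℂ) + Complex.I*(y:ℂ)) * pf ρ y t) t := by
  unfold pf
  have h0 : HasDerivAt (fun t : ℝ => (t : ℂ)) 1 t := (hasDerivAt_id t).ofReal_comp
  have h4 : HasDerivAt (fun t : ℝ => (t:ℂ)^4) (4*(t:ℂ)^3) t := by
    simpa using (hasDerivAt_pow 4 ((t:ℂ))).comp_ofReal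
  have h2 : HasDerivAt (fun t : ℝ => (t:ℂ)^2) (2*(t:ℂ)) t := by
    simpa using (hasDerivAt_pow 2 ((t:ℂ))).comp_ofReal
  have h1 : HasDerivAt (fun t : ℝ =>
      -(t : ℂ) ^ 4 / 4 - (ρ : ℂ) / 2 * (t : ℂ) ^ 2 + Complex.I * (t : ℂ) * (y : ℂ))
      (-(t:ℂ)^3 - (ρ:ℂ)*(t:ℂ) + Complex.I*(y:ℂ)) t := by
    have h := ((h4.neg.div_const 4).sub (h2.const_mul ((ρ:ℂ)/2))).add
      ((h0.const_mul Complex.I).mul_const (y:ℂ))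
    refine h.congr_deriv ?_
    ring
  have h3 := h1.cexp
  convert h3 using 1
  ring

lemma tendsto_pw_atTop (ρ : ℝ) : Tendsto (pw ρ) atTop atBot := by
  have h1 : Tendsto (fun u:ℝ => u*(u+2*ρ)) atTop atTop :=
    tendsto_id.atTop_mul_atTop₀ (tendsto_atTop_add_const_right _ _ tendsto_id)
  have h2 : Tendsto (fun u:ℝ => u*(u+2*ρ)/4) atTop atTop :=
    h1.atTop_div_const (by norm_num)
  have h3 : Tendsto (fun u:ℝ => -(u*(u+2*ρ)/4)) atTop atBot :=
    tendsto_neg_atTop_atBot.comp h2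
  have ht2 : Tendsto (fun t:ℝ => t^2) atTop atTop := tendsto_pow_atTop (two_ne_zero)
  have := h3.comp ht2
  apply this.congr
  intro t
  simp only [Function.comp]
  unfold pw
  ring

lemma tendsto_pw_atBot (ρ : ℝ) : Tendsto (pw ρ) atBot atBot := by
  have h1 : Tendsto (fun u:ℝ => u*(u+2*ρ)) atTop atTop :=
    tendsto_id.atTop_mul_atTop₀ (tendsto_atTop_add_const_right _ _ tendsto_id)
  have h2 : Tendsto (fun u:ℝ => u*(u+2*ρ)/4) atTop atTop :=
    h1.atTop_div_const (by norm_num)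
  have h3 : Tendsto (fun u:ℝ => -(u*(u+2*ρ)/4)) atTop atBot :=
    tendsto_neg_atTop_atBot.comp h2
  have ht2 : Tendsto (fun t:ℝ => t^2) atBot atTop := by
    have hp : Tendsto (fun x : ℝ => x ^ 2) atTop atTop :=
      tendsto_pow_atTop (two_ne_zero)
    have := hp.comp ((tendsto_neg_atBot_atTop : Tendsto (Neg.neg : ℝ → ℝ) atBot atTop))
    refine this.congr fun t => ?_
    simp [Function.comp, neg_sq]
  have := h3.comp ht2
  apply this.congr
  intro t
  simp only [Function.comp]
  unfold pw
  ring

lemma tendsto_pf_atTop (ρ y : ℝ) :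
    Tendsto (fun t : ℝ => pf ρ y t) atTop (𝓝 0) := by
  apply squeeze_zero_norm (fun t => (norm_pf ρ y t).le)
  exact Real.tendsto_exp_atBot.comp (tendsto_pw_atTop ρ)

lemma tendsto_pf_atBot (ρ y : ℝ) :
    Tendsto (fun t : ℝ => pf ρ y t) atBot (𝓝 0) := by
  apply squeeze_zero_norm (fun t => (norm_pf ρ y t).le)
  exact Real.tendsto_exp_atBot.comp (tendsto_pw_atBot ρ)

lemma intIn (ρ : ℝ) (n : ℕ) (y : ℝ) :
    Integrable (fun t : ℝ => (Complex.I*(t:ℂ))^n * pf ρ y t) := by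
  refine ((intn ρ n y).const_mul (Complex.I^n)).congr
    (Filter.Eventually.of_forall fun t => ?_)
  show Complex.I^n * ((t:ℂ)^n * pf ρ y t) = (Complex.I*(t:ℂ))^n * pf ρ y t
  rw [mul_pow]; ring

lemma norm_In (ρ : ℝ) (n : ℕ) (y t : ℝ) :
    ‖(Complex.I*(t:ℂ))^n * pf ρ y t‖ = |t|^n * Real.exp (pw ρ t) := by
  rw [norm_mul, norm_pow, norm_mul, Complex.norm_I, one_mul, Complex.norm_real,
    Real.norm_eq_abs, norm_pf]

lemma int_deriv_t (ρ y : ℝ) :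
    Integrable (fun t : ℝ => (-(t:ℂ)^3 - (ρ:ℂ)*(t:ℂ) + Complex.I*(y:ℂ)) * pf ρ y t) := by
  have h := (((intn ρ 3 y).neg).sub ((intn ρ 1 y).const_mul ((ρ:ℂ)))).add
    ((intn ρ 0 y).const_mul (Complex.I*(y:ℂ)))
  refine h.congr (Filter.Eventually.of_forall fun t => ?_)
  simp only [Pi.add_apply, Pi.sub_apply, Pi.neg_apply]
  ring

lemma integral_deriv_zero (ρ y : ℝ) :
    ∫ t : ℝ, (-(t:ℂ)^3 - (ρ:ℂ)*(t:ℂ) + Complex.I*(y:ℂ)) * pf ρ y t = 0 := by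
  have hint := int_deriv_t ρ y
  have hIoi : ∫ t in Ioi (0:ℝ),
      (-(t:ℂ)^3 - (ρ:ℂ)*(t:ℂ) + Complex.I*(y:ℂ)) * pf ρ y t = 0 - pf ρ y 0 :=
    integral_Ioi_of_hasDerivAt_of_tendsto' (fun t _ => hasDerivAt_pf_t ρ y t)
      hint.integrableOn (tendsto_pf_atTop ρ y)
  have hIic : ∫ t in Iic (0:ℝ),
      (-(t:ℂ)^3 - (ρ:ℂ)*(t:ℂ) + Complex.I*(y:ℂ)) * pf ρ y t = pf ρ y 0 - 0 :=
    integral_Iic_of_hasDerivAt_of_tendsto' (fun t _ => hasDerivAt_pf_t ρ y t)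
      hint.integrableOn (tendsto_pf_atBot ρ y)
  rw [← intervalIntegral.integral_Iic_add_Ioi (b := (0:ℝ)) hint.integrableOn hint.integrableOn, hIoi, hIic]
  ring

/-- The iterated integrals. -/
def PI (ρ : ℝ) (n : ℕ) (y : ℝ) : ℂ := ∫ t : ℝ, (Complex.I*(t:ℂ))^n * pf ρ y t

lemma hasDerivAt_PI (ρ : ℝ) (n : ℕ) (y : ℝ) :
    HasDerivAt (PI ρ n) (PI ρ (n+1) y) y := by
  unfold PI
  have key := hasDerivAt_integral_of_dominated_loc_of_deriv_le (μ := volume) (𝕜 := ℝ)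
    (F := fun (x : ℝ) (t : ℝ) => (Complex.I*(t:ℂ))^n * pf ρ x t)
    (F' := fun (x : ℝ) (t : ℝ) => (Complex.I*(t:ℂ))^(n+1) * pf ρ x t)
    (x₀ := y) (bound := fun t => |t|^(n+1) * Real.exp (pw ρ t)) (s := Metric.ball y 1) (Metric.ball_mem_nhds y one_pos)
    (Filter.Eventually.of_forall fun x =>
      ((Continuous.mul (by fun_prop) (cont_pf ρ x)).aestronglyMeasurable))
    (intIn ρ n y)
    ((Continuous.mul (by fun_prop) (cont_pf ρ y)).aestronglyMeasurable)
    (Filter.Eventually.of_forall fun t => fun x _ => (norm_In ρ (n+1) x t).le)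
    (intE ρ (n+1))
    (Filter.Eventually.of_forall fun t => fun x _ => by
      have h := (hasDerivAt_pf_y ρ t x).const_mul ((Complex.I*(t:ℂ))^n)
      refine h.congr_deriv ?_
      ring)
  exact key.2

lemma PI3_eq (ρ x : ℝ) : PI ρ 3 x = (x:ℂ) * PI ρ 0 x + (ρ:ℂ) * PI ρ 1 x := by
  have hzero := integral_deriv_zero ρ x
  have hsplit : (fun t : ℝ => (Complex.I*(t:ℂ))^3 * pf ρ x t) =
      fun t : ℝ => Complex.I * ((-(t:ℂ)^3 - (ρ:ℂ)*(t:ℂ) + Complex.I*(x:ℂ)) * pf ρ x t)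
      + ((x:ℂ) * ((Complex.I*(t:ℂ))^0 * pf ρ x t)
      + (ρ:ℂ) * ((Complex.I*(t:ℂ))^1 * pf ρ x t)) := by
    funext t
    linear_combination (Complex.I * (t:ℂ)^3 * pf ρ x t - (x:ℂ) * pf ρ x t) * Complex.I_sq
  have h1 : Integrable (fun t : ℝ =>
      Complex.I * ((-(t:ℂ)^3 - (ρ:ℂ)*(t:ℂ) + Complex.I*(x:ℂ)) * pf ρ x t)) :=
    (int_deriv_t ρ x).const_mul Complex.I
  have h2 : Integrable (fun t : ℝ => (x:ℂ) * ((Complex.I*(t:ℂ))^0 * pf ρ x t)) volume :=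
    (intIn ρ 0 x).const_mul (x:ℂ)
  have h3 : Integrable (fun t : ℝ => (ρ:ℂ) * ((Complex.I*(t:ℂ))^1 * pf ρ x t)) volume :=
    (intIn ρ 1 x).const_mul (ρ:ℂ)
  have h23 : Integrable (fun t : ℝ => (x:ℂ) * ((Complex.I*(t:ℂ))^0 * pf ρ x t)
      + (ρ:ℂ) * ((Complex.I*(t:ℂ))^1 * pf ρ x t)) volume := h2.add h3
  show (∫ t : ℝ, (Complex.I*(t:ℂ))^3 * pf ρ x t) = _
  rw [hsplit, integral_add h1 h23, integral_add h2 h3, integral_const_mul,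
    integral_const_mul, integral_const_mul, hzero]
  simp only [mul_zero, zero_add]
  rfl

lemma iter3 (ρ : ℝ) (c : ℂ) :
    iteratedDeriv 3 (fun y : ℝ => c * PI ρ 0 y) = fun y => c * PI ρ 3 y := by
  have hD : ∀ n : ℕ, deriv (fun y : ℝ => c * PI ρ n y) = fun y => c * PI ρ (n+1) y := by
    intro n; funext y; exact ((hasDerivAt_PI ρ n y).const_mul c).deriv
  rw [iteratedDeriv_succ, iteratedDeriv_succ, iteratedDeriv_one, hD 0, hD 1, hD 2]

end

/-- The Pearcey integral `P(x) = (1/2π) ∫ exp(-t⁴/4 - ρt²/2 + itx) dt` satisfies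
`P'''(x) = x·P(x) + ρ·P'(x)`. -/
theorem pearcey_ode (ρ : ℝ) :
    ∀ x : ℝ,
      iteratedDeriv 3
        (fun y : ℝ => (1 / (2 * (Real.pi : ℂ))) *
          ∫ t : ℝ, Complex.exp (-(t : ℂ) ^ 4 / 4 - (ρ : ℂ) / 2 * (t : ℂ) ^ 2
            + Complex.I * (t : ℂ) * (y : ℂ))) x
      = (x : ℂ) *
          ((fun y : ℝ => (1 / (2 * (Real.pi : ℂ))) *
            ∫ t : ℝ, Complex.exp (-(t : ℂ) ^ 4 / 4 - (ρ : ℂ) / 2 * (t : ℂ) ^ 2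
              + Complex.I * (t : ℂ) * (y : ℂ))) x)
        + (ρ : ℂ) *
          deriv (fun y : ℝ => (1 / (2 * (Real.pi : ℂ))) *
            ∫ t : ℝ, Complex.exp (-(t : ℂ) ^ 4 / 4 - (ρ : ℂ) / 2 * (t : ℂ) ^ 2
              + Complex.I * (t : ℂ) * (y : ℂ))) x := by
  intro x
  set c : ℂ := 1 / (2 * (Real.pi : ℂ)) with hc
  have hQ : (fun y : ℝ => c *
      ∫ t : ℝ, Complex.exp (-(t : ℂ) ^ 4 / 4 - (ρ : ℂ) / 2 * (t : ℂ) ^ 2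
        + Complex.I * (t : ℂ) * (y : ℂ))) = fun y => c * PI ρ 0 y := by
    funext y
    unfold PI pf
    simp only [pow_zero, one_mul]
  have hD0 : deriv (fun y : ℝ => c * PI ρ 0 y) = fun y => c * PI ρ 1 y := by
    funext y; exact ((hasDerivAt_PI ρ 0 y).const_mul c).deriv
  rw [hQ, iter3, hD0]
  simp only []
  rw [PI3_eq]

  ring
end

section
/- Suppose p₀,…,p₃, q₀,…,q₃ : (0,∞) → ℂ are differentiable functions satisfying the 8 differential equations: p₀' = -√2 p₃q₂; q₀' = √2 p₂q₁; q₁' = q₂ - (2/s)p₂q₁q₂; q₂' = √2 p₀q₁ + q₃ + (2/s)p₂q₂²; q₃' = s·q₁ + √2 q₀q₂ - (2/s)p₂q₂q₃; p₁' = -√2 p₀p₂ - s·p₃ + (2/s)p₁p₂q₂; p₂' = -√2 p₃q₀ - p₁ - (2/s)p₂²q₂; p₃' = -p₂ + (2/s)p₂p₃q₂. Then the quantity p₁(s)q₁(s) + p₂(s)q₂(s) + p₃(s)q₃(s) is constant on (0,∞). -/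
open Real

/-- Along solutions of the 8-dimensional system associated with the deformed
Pearcey determinant, `p₁q₁ + p₂q₂ + p₃q₃` is constant on `(0,∞)`. -/
theorem trace_constraint_constant
    (p₀ p₁ p₂ p₃ q₀ q₁ q₂ q₃ : ℝ → ℂ)
    (hp₀ : ∀ s ∈ Set.Ioi (0:ℝ), HasDerivAt p₀ (-(Real.sqrt 2 : ℂ) * p₃ s * q₂ s) s)
    (hq₀ : ∀ s ∈ Set.Ioi (0:ℝ), HasDerivAt q₀ ((Real.sqrt 2 : ℂ) * p₂ s * q₁ s) s)
    (hq₁ : ∀ s ∈ Set.Ioi (0:ℝ), HasDerivAt q₁ (q₂ s - 2 / (s:ℂ) * p₂ s * q₁ s * q₂ s) s)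
    (hq₂ : ∀ s ∈ Set.Ioi (0:ℝ), HasDerivAt q₂
      ((Real.sqrt 2 : ℂ) * p₀ s * q₁ s + q₃ s + 2 / (s:ℂ) * p₂ s * q₂ s ^ 2) s)
    (hq₃ : ∀ s ∈ Set.Ioi (0:ℝ), HasDerivAt q₃
      ((s:ℂ) * q₁ s + (Real.sqrt 2 : ℂ) * q₀ s * q₂ s - 2 / (s:ℂ) * p₂ s * q₂ s * q₃ s) s)
    (hp₁ : ∀ s ∈ Set.Ioi (0:ℝ), HasDerivAt p₁
      (-(Real.sqrt 2 : ℂ) * p₀ s * p₂ s - (s:ℂ) * p₃ s + 2 / (s:ℂ) * p₁ s * p₂ s * q₂ s) s)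
    (hp₂ : ∀ s ∈ Set.Ioi (0:ℝ), HasDerivAt p₂
      (-(Real.sqrt 2 : ℂ) * p₃ s * q₀ s - p₁ s - 2 / (s:ℂ) * p₂ s ^ 2 * q₂ s) s)
    (hp₃ : ∀ s ∈ Set.Ioi (0:ℝ), HasDerivAt p₃
      (-p₂ s + 2 / (s:ℂ) * p₂ s * p₃ s * q₂ s) s) :
    ∃ c : ℂ, ∀ s ∈ Set.Ioi (0:ℝ),
      p₁ s * q₁ s + p₂ s * q₂ s + p₃ s * q₃ s = c := by
  set F : ℝ → ℂ := fun s => p₁ s * q₁ s + p₂ s * q₂ s + p₃ s * q₃ s with hF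
  have hder : ∀ s ∈ Set.Ioi (0:ℝ), HasDerivAt F 0 s := by
    intro s hs
    have h := (((hp₁ s hs).mul (hq₁ s hs)).add ((hp₂ s hs).mul (hq₂ s hs))).add
      ((hp₃ s hs).mul (hq₃ s hs))
    convert h using 1
    · rfl
    · rfl
    ring
  have hconv : Convex ℝ (Set.Ioi (0:ℝ)) := convex_Ioi 0
  refine ⟨F 1, fun s hs => ?_⟩
  have h1 : (1:ℝ) ∈ Set.Ioi (0:ℝ) := by norm_num
  exact hconv.is_const_of_fderivWithin_eq_zero (𝕜 := ℝ)
    (fun x hx => ((hder x hx).differentiableAt.restrictScalars ℝ).differentiableWithinAt)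
    (fun x hx => by
      have h := (((hder x hx).hasFDerivAt.restrictScalars ℝ).hasFDerivWithinAt).fderivWithin
        (isOpen_Ioi.uniqueDiffWithinAt hx)
      rw [h]
      ext v
      simp) hs h1
end

section
/- Suppose p₀,…,p₃,q₀,…,q₃ : (0,∞) → ℂ are differentiable, satisfy the system of 8 ODEs from the deformed Pearcey problem (as in the previous statement) together with the constraint p₁q₁ + p₂q₂ + p₃q₃ ≡ 0, and define H(s) = √2 p₀p₂q₁ + √2 p₃q₀q₂ + p₁q₂ + p₂q₃ + s·p₃q₁ + (1/(2s))(p₁q₁ - p₂q₂ + p₃q₃)². Then H'(s) = p₃(s)q₁(s) - (2/s²)p₂(s)²q₂(s)². -/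
open Real

/-- Along solutions of the deformed Pearcey system with the constraint
`p₁q₁ + p₂q₂ + p₃q₃ ≡ 0`, the Hamiltonian
`H = √2 p₀p₂q₁ + √2 p₃q₀q₂ + p₁q₂ + p₂q₃ + s p₃q₁ + (1/(2s))(p₁q₁-p₂q₂+p₃q₃)²`
satisfies `H'(s) = p₃q₁ - (2/s²)p₂²q₂²`. -/
theorem hamiltonian_derivative
    (p₀ p₁ p₂ p₃ q₀ q₁ q₂ q₃ : ℝ → ℂ)
    (hp₀ : ∀ s ∈ Set.Ioi (0:ℝ), HasDerivAt p₀ (-(Real.sqrt 2 : ℂ) * p₃ s * q₂ s) s)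
    (hq₀ : ∀ s ∈ Set.Ioi (0:ℝ), HasDerivAt q₀ ((Real.sqrt 2 : ℂ) * p₂ s * q₁ s) s)
    (hq₁ : ∀ s ∈ Set.Ioi (0:ℝ), HasDerivAt q₁ (q₂ s - 2 / (s:ℂ) * p₂ s * q₁ s * q₂ s) s)
    (hq₂ : ∀ s ∈ Set.Ioi (0:ℝ), HasDerivAt q₂
      ((Real.sqrt 2 : ℂ) * p₀ s * q₁ s + q₃ s + 2 / (s:ℂ) * p₂ s * q₂ s ^ 2) s)
    (hq₃ : ∀ s ∈ Set.Ioi (0:ℝ), HasDerivAt q₃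
      ((s:ℂ) * q₁ s + (Real.sqrt 2 : ℂ) * q₀ s * q₂ s - 2 / (s:ℂ) * p₂ s * q₂ s * q₃ s) s)
    (hp₁ : ∀ s ∈ Set.Ioi (0:ℝ), HasDerivAt p₁
      (-(Real.sqrt 2 : ℂ) * p₀ s * p₂ s - (s:ℂ) * p₃ s + 2 / (s:ℂ) * p₁ s * p₂ s * q₂ s) s)
    (hp₂ : ∀ s ∈ Set.Ioi (0:ℝ), HasDerivAt p₂
      (-(Real.sqrt 2 : ℂ) * p₃ s * q₀ s - p₁ s - 2 / (s:ℂ) * p₂ s ^ 2 * q₂ s) s)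
    (hp₃ : ∀ s ∈ Set.Ioi (0:ℝ), HasDerivAt p₃
      (-p₂ s + 2 / (s:ℂ) * p₂ s * p₃ s * q₂ s) s)
    (hconstraint : ∀ s ∈ Set.Ioi (0:ℝ),
      p₁ s * q₁ s + p₂ s * q₂ s + p₃ s * q₃ s = 0)
    (H : ℝ → ℂ)
    (hH : ∀ s ∈ Set.Ioi (0:ℝ), H s =
      (Real.sqrt 2 : ℂ) * p₀ s * p₂ s * q₁ s + (Real.sqrt 2 : ℂ) * p₃ s * q₀ s * q₂ s
        + p₁ s * q₂ s + p₂ s * q₃ s + (s:ℂ) * p₃ s * q₁ s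
        + 1 / (2 * (s:ℂ)) * (p₁ s * q₁ s - p₂ s * q₂ s + p₃ s * q₃ s) ^ 2) :
    ∀ s ∈ Set.Ioi (0:ℝ),
      HasDerivAt H (p₃ s * q₁ s - 2 / (s:ℂ) ^ 2 * p₂ s ^ 2 * q₂ s ^ 2) s := by
  intro s hs
  have hs0 : (0:ℝ) < s := hs
  have hsne : (s:ℂ) ≠ 0 := by exact_mod_cast ne_of_gt hs0
  have hev : (fun t => (Real.sqrt 2 : ℂ) * p₀ t * p₂ t * q₁ t
      + (Real.sqrt 2 : ℂ) * p₃ t * q₀ t * q₂ t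
      + p₁ t * q₂ t + p₂ t * q₃ t + (t:ℂ) * p₃ t * q₁ t
      + 2 * ((t:ℂ))⁻¹ * ((p₂ t * q₂ t) * (p₂ t * q₂ t))) =ᶠ[nhds s] H := by
    filter_upwards [Ioi_mem_nhds hs0] with t ht
    have ht0 : (t:ℂ) ≠ 0 := by
      exact_mod_cast ne_of_gt (Set.mem_Ioi.mp ht)
    have hc := hconstraint t ht
    have h1 : p₁ t * q₁ t - p₂ t * q₂ t + p₃ t * q₃ t = -2 * (p₂ t * q₂ t) := by
      linear_combination hc
    rw [hH t ht, h1]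
    field_simp
  have hid : HasDerivAt (fun t : ℝ => (t:ℂ)) 1 s := by
    simpa using HasDerivAt.ofReal_comp (hasDerivAt_id s)
  have hinv : HasDerivAt (fun t : ℝ => ((t:ℂ))⁻¹) (-((s:ℂ) ^ 2)⁻¹) s := by
    simpa using (hasDerivAt_inv hsne).comp_ofReal
  have hF := ((((((((hp₀ s hs).const_mul ((Real.sqrt 2 : ℂ))).mul (hp₂ s hs)).mul
        (hq₁ s hs)).add
        ((((hp₃ s hs).const_mul ((Real.sqrt 2 : ℂ))).mul (hq₀ s hs)).mul (hq₂ s hs))).add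
        ((hp₁ s hs).mul (hq₂ s hs))).add ((hp₂ s hs).mul (hq₃ s hs))).add
        ((hid.mul (hp₃ s hs)).mul (hq₁ s hs))).add
        ((hinv.const_mul (2:ℂ)).mul (((hp₂ s hs).mul (hq₂ s hs)).mul ((hp₂ s hs).mul (hq₂ s hs))))
  have hH' := hF.congr_of_eventuallyEq hev.symm
  convert hH' using 1
  · exact rfl
  simp only [Pi.mul_apply]
  field_simp
  ring
end

section
/- With the same ODE system, constraint ∑_{k=1}^3 p_k q_k ≡ 0, and Hamiltonian H as above, the action differential identity holds: ∑_{k=0}^3 p_k(s)q_k'(s) - H(s) = H(s) + (1/4)·d/ds[2p₀(s)q₀(s) + p₂(s)q₂(s) + 2p₃(s)q₃(s) - 3s·H(s)]. -/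
open Real

/-- The action differential identity
`Σ p_k q_k' - H = H + (1/4) d/ds [2p₀q₀ + p₂q₂ + 2p₃q₃ - 3sH]`
along solutions of the deformed Pearcey system with `p₁q₁+p₂q₂+p₃q₃ ≡ 0`. -/
theorem action_differential_identity
    (p₀ p₁ p₂ p₃ q₀ q₁ q₂ q₃ : ℝ → ℂ)
    (hp₀ : ∀ s ∈ Set.Ioi (0:ℝ), HasDerivAt p₀ (-(Real.sqrt 2 : ℂ) * p₃ s * q₂ s) s)
    (hq₀ : ∀ s ∈ Set.Ioi (0:ℝ), HasDerivAt q₀ ((Real.sqrt 2 : ℂ) * p₂ s * q₁ s) s)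
    (hq₁ : ∀ s ∈ Set.Ioi (0:ℝ), HasDerivAt q₁ (q₂ s - 2 / (s:ℂ) * p₂ s * q₁ s * q₂ s) s)
    (hq₂ : ∀ s ∈ Set.Ioi (0:ℝ), HasDerivAt q₂
      ((Real.sqrt 2 : ℂ) * p₀ s * q₁ s + q₃ s + 2 / (s:ℂ) * p₂ s * q₂ s ^ 2) s)
    (hq₃ : ∀ s ∈ Set.Ioi (0:ℝ), HasDerivAt q₃
      ((s:ℂ) * q₁ s + (Real.sqrt 2 : ℂ) * q₀ s * q₂ s - 2 / (s:ℂ) * p₂ s * q₂ s * q₃ s) s)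
    (hp₁ : ∀ s ∈ Set.Ioi (0:ℝ), HasDerivAt p₁
      (-(Real.sqrt 2 : ℂ) * p₀ s * p₂ s - (s:ℂ) * p₃ s + 2 / (s:ℂ) * p₁ s * p₂ s * q₂ s) s)
    (hp₂ : ∀ s ∈ Set.Ioi (0:ℝ), HasDerivAt p₂
      (-(Real.sqrt 2 : ℂ) * p₃ s * q₀ s - p₁ s - 2 / (s:ℂ) * p₂ s ^ 2 * q₂ s) s)
    (hp₃ : ∀ s ∈ Set.Ioi (0:ℝ), HasDerivAt p₃
      (-p₂ s + 2 / (s:ℂ) * p₂ s * p₃ s * q₂ s) s)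
    (hconstraint : ∀ s ∈ Set.Ioi (0:ℝ),
      p₁ s * q₁ s + p₂ s * q₂ s + p₃ s * q₃ s = 0)
    (H : ℝ → ℂ)
    (hH : ∀ s ∈ Set.Ioi (0:ℝ), H s =
      (Real.sqrt 2 : ℂ) * p₀ s * p₂ s * q₁ s + (Real.sqrt 2 : ℂ) * p₃ s * q₀ s * q₂ s
        + p₁ s * q₂ s + p₂ s * q₃ s + (s:ℂ) * p₃ s * q₁ s
        + 1 / (2 * (s:ℂ)) * (p₁ s * q₁ s - p₂ s * q₂ s + p₃ s * q₃ s) ^ 2) :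
    ∀ s ∈ Set.Ioi (0:ℝ),
      HasDerivAt (fun t : ℝ =>
          2 * p₀ t * q₀ t + p₂ t * q₂ t + 2 * p₃ t * q₃ t - 3 * (t:ℂ) * H t)
        (4 * ((p₀ s * deriv q₀ s + p₁ s * deriv q₁ s + p₂ s * deriv q₂ s
            + p₃ s * deriv q₃ s) - 2 * H s)) s := by
  intro s hs
  have hs0 : (0:ℝ) < s := hs
  have hsne : (s:ℂ) ≠ 0 := Complex.ofReal_ne_zero.mpr (ne_of_gt hs0)
  have hp₀' := hp₀ s hs
  have hp₁' := hp₁ s hs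
  have hp₂' := hp₂ s hs
  have hp₃' := hp₃ s hs
  have hq₀' := hq₀ s hs
  have hq₁' := hq₁ s hs
  have hq₂' := hq₂ s hs
  have hq₃' := hq₃ s hs
  have hC := hconstraint s hs
  have hsder : HasDerivAt (fun t : ℝ => (t:ℂ)) 1 s := by
    exact Complex.ofRealCLM.hasDerivAt (x := s)
  have h2t : HasDerivAt (fun t : ℝ => 2 * (t:ℂ)) (0 * (s:ℂ) + 2 * 1) s :=
    (hasDerivAt_const s (2:ℂ)).mul hsder
  have h2tne : (2:ℂ) * (s:ℂ) ≠ 0 := mul_ne_zero two_ne_zero hsne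
  have hdiv := (hasDerivAt_const s (1:ℂ)).div h2t h2tne
  have hK := ((hp₁'.mul hq₁').sub (hp₂'.mul hq₂')).add (hp₃'.mul hq₃')
  have hF := ((((((((hasDerivAt_const s ((Real.sqrt 2:ℝ):ℂ)).mul hp₀').mul hp₂').mul hq₁').add
      ((((hasDerivAt_const s ((Real.sqrt 2:ℝ):ℂ)).mul hp₃').mul hq₀').mul hq₂')).add
      (hp₁'.mul hq₂')).add (hp₂'.mul hq₃')).add ((hsder.mul hp₃').mul hq₁')).add
      (hdiv.mul (hK.mul hK))
  have hG := ((((hasDerivAt_const s (2:ℂ)).mul (hp₀'.mul hq₀')).add (hp₂'.mul hq₂')).add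
      ((hasDerivAt_const s (2:ℂ)).mul (hp₃'.mul hq₃'))).sub
      (((hasDerivAt_const s (3:ℂ)).mul hsder).mul hF)
  have heq : (fun t : ℝ =>
        2 * p₀ t * q₀ t + p₂ t * q₂ t + 2 * p₃ t * q₃ t - 3 * (t:ℂ) * H t)
      =ᶠ[nhds s] (fun t : ℝ =>
        2 * (p₀ t * q₀ t) + p₂ t * q₂ t + 2 * (p₃ t * q₃ t)
          - 3 * (t:ℂ) * (((Real.sqrt 2:ℝ):ℂ) * p₀ t * p₂ t * q₁ t
            + ((Real.sqrt 2:ℝ):ℂ) * p₃ t * q₀ t * q₂ t + p₁ t * q₂ t + p₂ t * q₃ t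
            + (t:ℂ) * p₃ t * q₁ t
            + 1 / (2 * (t:ℂ)) * ((p₁ t * q₁ t - p₂ t * q₂ t + p₃ t * q₃ t)
                * (p₁ t * q₁ t - p₂ t * q₂ t + p₃ t * q₃ t)))) := by
    filter_upwards [isOpen_Ioi.mem_nhds hs] with t ht
    rw [hH t ht]; ring
  have hGH := hG.congr_of_eventuallyEq heq
  convert hGH using 1
  · rfl
  rw [(hq₀ s hs).deriv, (hq₁ s hs).deriv, (hq₂ s hs).deriv, (hq₃ s hs).deriv, hH s hs]
  have hu : (s:ℂ) * ((s:ℂ))⁻¹ = 1 := mul_inv_cancel₀ hsne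
  simp only [Pi.mul_apply, Pi.div_apply, Pi.add_apply, Pi.sub_apply]
  linear_combination (-((5/2:ℂ)*(p₃ s)*(q₃ s)*(((s:ℂ))⁻¹) + (1/2:ℂ)*(p₂ s)*(q₂ s)*(((s:ℂ))⁻¹) + (5/2:ℂ)*(p₁ s)*(q₁ s)*(((s:ℂ))⁻¹) + (3/2:ℂ)*((s:ℂ))*(p₃ s)*(q₃ s)*(((s:ℂ))⁻¹)^2 + (6)*((s:ℂ))*(p₂ s)*(q₃ s)*(((s:ℂ))⁻¹) + (-9/2:ℂ)*((s:ℂ))*(p₂ s)*(q₂ s)*(((s:ℂ))⁻¹)^2 + (-6)*((s:ℂ))*(p₁ s)*(q₂ s)*(((s:ℂ))⁻¹) + (3/2:ℂ)*((s:ℂ))*(p₁ s)*(q₁ s)*(((s:ℂ))⁻¹)^2 + (-6)*(((Real.sqrt 2:ℝ):ℂ))*((s:ℂ))*(p₃ s)*(q₀ s)*(q₂ s)*(((s:ℂ))⁻¹) + (6)*(((Real.sqrt 2:ℝ):ℂ))*((s:ℂ))*(p₀ s)*(p₂ s)*(q₁ s)*(((s:ℂ))⁻¹))) * hC + (-((6)*(p₂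 s)^2*(q₂ s)^2*(((s:ℂ))⁻¹))) * hu
end
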